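/- arXiv:2104.04378 — 5 statements merged into one kernel-verified Lean document; each statement's English description precedes it below -/
import Mathlib

section
/- Let k be a field, let 𝔪 be a Lie algebra over k that is generated, as a Lie algebra, by a subset S ⊆ 𝔪 (i.e. the Lie subalgebra of 𝔪 generated by S is all of 𝔪), and let 𝔤 be a Lie module over 𝔪. Let ω : 𝔪 × 𝔪 → 𝔤 be a k-bilinear alternating map (ω(u,u) = 0 for all u) which is closed for the Chevalley–Eilenberg differential, i.e. for all u, v, w ∈ 𝔪: u⋅ω(v,w) − v⋅ω(u,w) + w⋅ω(u,v) − ω([u,v],w) + ω([u,w],v) − ω([v,w],u) = 0. If ω(s,x) = 0 for all s ∈ S and all x ∈ 𝔪, then ω = 0. -/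
/-- If `𝔪` is a Lie algebra generated (as a Lie algebra) by a subset `S`, `𝔤` is a Lie
module over `𝔪`, and `ω` is an alternating bilinear 2-cochain with values in `𝔤` that is
closed for the Chevalley–Eilenberg differential and vanishes whenever its first argument
lies in `S`, then `ω = 0`. -/
theorem spencer_two_cochain_vanishes
    (k : Type*) [Field k]
    (𝔪 : Type*) [LieRing 𝔪] [LieAlgebra k 𝔪]
    (𝔤 : Type*) [AddCommGroup 𝔤] [Module k 𝔤] [LieRingModule 𝔪 𝔤] [LieModule k 𝔪 𝔤]
    (S : Set 𝔪) (hgen : LieSubalgebra.lieSpan k 𝔪 S = ⊤)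
    (ω : 𝔪 →ₗ[k] 𝔪 →ₗ[k] 𝔤)
    (halt : ∀ u : 𝔪, ω u u = 0)
    (hclosed : ∀ u v w : 𝔪,
      ⁅u, ω v w⁆ - ⁅v, ω u w⁆ + ⁅w, ω u v⁆
        - ω ⁅u, v⁆ w + ω ⁅u, w⁆ v - ω ⁅v, w⁆ u = 0)
    (hvanish : ∀ s ∈ S, ∀ x : 𝔪, ω s x = 0) :
    ω = 0 := by
  have hanti : ∀ u v : 𝔪, ω u v = -ω v u := by
    intro u v
    have h := halt (u + v)
    simp only [map_add, LinearMap.add_apply, halt] at h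
    have h2 : ω u v + ω v u = 0 := by rw [← h]; abel
    exact eq_neg_of_add_eq_zero_left h2

  set T : LieSubalgebra k 𝔪 :=
    { LinearMap.ker ω with
      lie_mem' := by
        intro u v hu hv
        simp only [Submodule.mem_carrier, LinearMap.mem_ker] at hu hv ⊢
        ext x
        have h := hclosed u v x
        have h1 : ω v x = 0 := by rw [hv]; rfl
        have h2 : ω u x = 0 := by rw [hu]; rfl
        have h3 : ω u v = 0 := by rw [hu]; rfl
        have h4 : ω ⁅u, x⁆ v = 0 := by rw [hanti, hv]; simp
        have h5 : ω ⁅v, x⁆ u = 0 := by rw [hanti, hu]; simp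
        rw [h1, h2, h3, h4, h5] at h
        simpa using h.symm }
  have hT : ∀ u : 𝔪, u ∈ T := by
    intro u
    have : LieSubalgebra.lieSpan k 𝔪 S ≤ T := by
      apply LieSubalgebra.lieSpan_le.mpr
      intro s hs
      show ω s = 0
      ext x
      exact hvanish s hs x
    rw [hgen] at this
    exact this trivial
  ext u x
  have : ω u = 0 := hT u
  rw [this]; rfl
end

section
/- Let k be a field of characteristic zero and V a vector space over k containing two linearly independent vectors (dim V ≥ 2). Let A : V × V → k be a k-bilinear form such that for all u, v ∈ V the vector identity A(u,v)·u + A(u,u)·v − 2·A(v,u)·u = 0 holds in V. Then A = 0. -/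
lemma spencer_key
    {k : Type*} [Field k] [CharZero k]
    {V : Type*} [AddCommGroup V] [Module k V]
    (A : V →ₗ[k] V →ₗ[k] k)
    (hA : ∀ u v : V, A u v • u + A u u • v - (2 : k) • (A v u • u) = 0)
    {u v : V} (hli : LinearIndependent k ![u, v]) :
    A u v = 0 ∧ A u u = 0 := by
  have hli' : LinearIndependent k ![v, u] := by
    rw [LinearIndependent.pair_iff] at hli ⊢
    intro s t hst
    have := hli t s (by rw [← hst]; abel)
    exact ⟨this.2, this.1⟩
  have h1 := hA u v
  have h2 := hA v u
  rw [LinearIndependent.pair_iff] at hli hli'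
  have e1 : (A u v - 2 * A v u) • u + A u u • v = 0 := by
    rw [← h1]; rw [sub_smul, mul_smul, smul_smul]; ring_nf; abel
  have e2 : (A v u - 2 * A u v) • v + A v v • u = 0 := by
    rw [← h2]; rw [sub_smul, mul_smul, smul_smul]; ring_nf; abel
  obtain ⟨c1, c2⟩ := hli _ _ e1
  obtain ⟨d1, _⟩ := hli' _ _ e2
  have h3 : (3 : k) * A u v = 0 := by linear_combination -c1 - 2 * d1
  have : A u v = 0 := (mul_eq_zero.mp h3).resolve_left (by norm_num)
  exact ⟨this, c2⟩

/-- If `V` is a vector space over a field of characteristic zero containing two linearly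
independent vectors and `A : V × V → k` is a bilinear form satisfying
`A(u,v)·u + A(u,u)·v − 2·A(v,u)·u = 0` for all `u, v`, then `A = 0`. -/
theorem bilinear_form_spencer_vanishes
    (k : Type*) [Field k] [CharZero k]
    (V : Type*) [AddCommGroup V] [Module k V]
    (hdim : ∃ u v : V, LinearIndependent k ![u, v])
    (A : V →ₗ[k] V →ₗ[k] k)
    (hA : ∀ u v : V, A u v • u + A u u • v - (2 : k) • (A v u • u) = 0) :
    A = 0 := by
  obtain ⟨e, f, hef⟩ := hdim
  -- A x x = 0 for all x
  have hdiag : ∀ x : V, A x x = 0 := by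
    intro x
    by_cases hx : x = 0
    · simp [hx]
    · -- find w with ![x, w] linearly independent
      by_cases hxe : LinearIndependent k ![x, e]
      · exact (spencer_key A hA hxe).2
      · -- e ∈ span {x}
        rw [LinearIndependent.pair_iff' hx] at hxe
        push_neg at hxe
        obtain ⟨a, ha⟩ := hxe
        have hxf : LinearIndependent k ![x, f] := by
          rw [LinearIndependent.pair_iff' hx]
          intro b hb
          apply hef.ne_zero 0
          simp only [Matrix.cons_val_zero]
          -- e = a • x, f = b • x would contradict lin indep of e f
          have : LinearIndependent k ![a • x, b • x] := by
            rwa [ha, hb]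
          rw [LinearIndependent.pair_iff] at this
          by_cases hb0 : b = 0
          · exfalso
            have := (this (0 : k) 1 (by simp [hb0])).2
            exact one_ne_zero this
          · exfalso
            have := (this 1 (-(a / b)) (by
              rw [one_smul, smul_smul, ← add_smul]
              have hz : a + -(a / b) * b = 0 := by field_simp; ring
              rw [hz, zero_smul])).1
            exact one_ne_zero this
        exact (spencer_key A hA hxf).2
  -- now A is alternating, hence A x y = - A y x; combined with off-diag vanishing
  ext x y
  simp only [LinearMap.zero_apply]
  by_cases hxy : LinearIndependent k ![x, y]
  · exact (spencer_key A hA hxy).1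
  · by_cases hx : x = 0
    · simp [hx]
    · rw [LinearIndependent.pair_iff' hx] at hxy
      push_neg at hxy
      obtain ⟨a, ha⟩ := hxy
      rw [← ha]
      simp [hdiag x]
end

section
/- Let I, J ⊆ ℝ be open intervals, F₀, F₁ : I → ℝ functions, and a, b, y : I → ℝ twice differentiable functions with b(x) ≠ 0 and a'(x) ≠ 0 for all x ∈ I. Suppose a : I → J is a bijection with twice differentiable inverse g : J → I, and suppose y satisfies y'' = F₀·y + F₁·y' on I. Define z : J → ℝ by z = (b·y)∘g, and define G₀, G₁ : J → ℝ by G₀ = [((b'' + b·F₀)·b − (2b' + b·F₁)·b')/((a')²·b²)]∘g and G₁ = [((2b' + b·F₁)·a' − b·a'')/((a')²·b)]∘g. Then z is twice differentiable on J and satisfies z'' = G₀·z + G₁·z' on J. -/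
/-- Transformation of the linear second-order ODE `y'' = F₀·y + F₁·y'` under the point
transformation `(x, y) ↦ (a x, b x · y)`: if `a : I → J` is a bijection with twice
differentiable inverse `g`, `a' ≠ 0` and `b ≠ 0` on `I`, then `z = (b·y) ∘ g` is twice
differentiable on `J` and satisfies `z'' = G₀·z + G₁·z'` there, with the transformed
coefficients `G₀ = [((b'' + b F₀) b − (2b' + b F₁) b') / ((a')² b²)] ∘ g` and
`G₁ = [((2b' + b F₁) a' − b a'') / ((a')² b)] ∘ g`. -/
theorem second_order_ode_point_transformation
    (I J : Set ℝ) (hIopen : IsOpen I) (hIconn : I.OrdConnected)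
    (hJopen : IsOpen J) (hJconn : J.OrdConnected)
    (F₀ F₁ a b y g : ℝ → ℝ)
    (ha1 : ∀ x ∈ I, DifferentiableAt ℝ a x)
    (ha2 : ∀ x ∈ I, DifferentiableAt ℝ (deriv a) x)
    (hb1 : ∀ x ∈ I, DifferentiableAt ℝ b x)
    (hb2 : ∀ x ∈ I, DifferentiableAt ℝ (deriv b) x)
    (hy1 : ∀ x ∈ I, DifferentiableAt ℝ y x)
    (hy2 : ∀ x ∈ I, DifferentiableAt ℝ (deriv y) x)
    (hbne : ∀ x ∈ I, b x ≠ 0)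
    (ha'ne : ∀ x ∈ I, deriv a x ≠ 0)
    (hbij : Set.BijOn a I J)
    (hginv : Set.InvOn g a I J)
    (hgmaps : Set.MapsTo g J I)
    (hg1 : ∀ t ∈ J, DifferentiableAt ℝ g t)
    (hg2 : ∀ t ∈ J, DifferentiableAt ℝ (deriv g) t)
    (hODE : ∀ x ∈ I, deriv (deriv y) x = F₀ x * y x + F₁ x * deriv y x) :
    let z : ℝ → ℝ := fun t => b (g t) * y (g t)
    let G₀ : ℝ → ℝ := fun t =>
      ((deriv (deriv b) (g t) + b (g t) * F₀ (g t)) * b (g t)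
          - (2 * deriv b (g t) + b (g t) * F₁ (g t)) * deriv b (g t))
        / ((deriv a (g t)) ^ 2 * (b (g t)) ^ 2)
    let G₁ : ℝ → ℝ := fun t =>
      ((2 * deriv b (g t) + b (g t) * F₁ (g t)) * deriv a (g t)
          - b (g t) * deriv (deriv a) (g t))
        / ((deriv a (g t)) ^ 2 * b (g t))
    (∀ t ∈ J, DifferentiableAt ℝ z t) ∧
    (∀ t ∈ J, DifferentiableAt ℝ (deriv z) t) ∧
    (∀ t ∈ J, deriv (deriv z) t = G₀ t * z t + G₁ t * deriv z t) := by

  intro z G₀ G₁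
  set w : ℝ → ℝ := fun x => b x * y x with hw
  have hwd : ∀ x ∈ I, DifferentiableAt ℝ w x := fun x hx => (hb1 x hx).mul (hy1 x hx)
  have hw' : ∀ x ∈ I, deriv w x = deriv b x * y x + b x * deriv y x :=
    fun x hx => deriv_mul (hb1 x hx) (hy1 x hx)
  have hw'ev : ∀ x ∈ I, deriv w =ᶠ[nhds x] fun x => deriv b x * y x + b x * deriv y x :=
    fun x hx => Filter.eventuallyEq_of_mem (hIopen.mem_nhds hx) hw'
  have hw'd : ∀ x ∈ I, DifferentiableAt ℝ (deriv w) x := fun x hx =>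
    ((((hb2 x hx).mul (hy1 x hx)).add ((hb1 x hx).mul (hy2 x hx))).congr_of_eventuallyEq
      (hw'ev x hx))
  have hw'' : ∀ x ∈ I, deriv (deriv w) x =
      deriv (deriv b) x * y x + 2 * deriv b x * deriv y x
        + b x * (F₀ x * y x + F₁ x * deriv y x) := by
    intro x hx
    rw [(hw'ev x hx).deriv_eq,
      deriv_fun_add (f := fun x => deriv b x * y x) (g := fun x => b x * deriv y x)
        ((hb2 x hx).mul (hy1 x hx)) ((hb1 x hx).mul (hy2 x hx)),
      deriv_fun_mul (hb2 x hx) (hy1 x hx), deriv_fun_mul (hb1 x hx) (hy2 x hx), hODE x hx]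
    ring
  have hg' : ∀ t ∈ J, deriv a (g t) * deriv g t = 1 := by
    intro t ht
    have hev : (fun s => a (g s)) =ᶠ[nhds t] id :=
      Filter.eventuallyEq_of_mem (hJopen.mem_nhds ht) hginv.2
    have h1 := hev.deriv_eq
    rw [deriv_id'] at h1
    have h2 : deriv (fun s => a (g s)) t = deriv a (g t) * deriv g t :=
      deriv_comp t (ha1 _ (hgmaps ht)) (hg1 t ht)
    rw [← h2]
    exact h1
  have hgderiv : ∀ t ∈ J, deriv g t = (deriv a (g t))⁻¹ :=
    fun t ht => eq_inv_of_mul_eq_one_left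
      (by rw [mul_comm]; exact hg' t ht)
  have hzd : ∀ t ∈ J, DifferentiableAt ℝ z t := fun t ht =>
    (hwd _ (hgmaps ht)).comp t (hg1 t ht)
  have hz' : ∀ t ∈ J, deriv z t = deriv w (g t) * deriv g t := fun t ht =>
    deriv_comp t (hwd _ (hgmaps ht)) (hg1 t ht)
  have hz'ev : ∀ t ∈ J, deriv z =ᶠ[nhds t] fun s => deriv w (g s) * deriv g s :=
    fun t ht => Filter.eventuallyEq_of_mem (hJopen.mem_nhds ht) hz'
  have hz'd : ∀ t ∈ J, DifferentiableAt ℝ (deriv z) t := fun t ht =>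
    ((((hw'd _ (hgmaps ht)).comp t (hg1 t ht)).mul (hg2 t ht)).congr_of_eventuallyEq
      (hz'ev t ht))
  have hz'' : ∀ t ∈ J, deriv (deriv z) t =
      deriv (deriv w) (g t) * deriv g t * deriv g t + deriv w (g t) * deriv (deriv g) t := by
    intro t ht
    have h1 : DifferentiableAt ℝ (fun s => deriv w (g s)) t :=
      (hw'd _ (hgmaps ht)).comp t (hg1 t ht)
    have h2 : deriv (fun s => deriv w (g s)) t = deriv (deriv w) (g t) * deriv g t :=
      deriv_comp t (hw'd _ (hgmaps ht)) (hg1 t ht)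
    rw [(hz'ev t ht).deriv_eq, deriv_fun_mul h1 (hg2 t ht), h2]
  have hg'' : ∀ t ∈ J, deriv (deriv g) t =
      -(deriv (deriv a) (g t)) / (deriv a (g t)) ^ 3 := by
    intro t ht
    have hev : deriv g =ᶠ[nhds t] fun s => (deriv a (g s))⁻¹ :=
      Filter.eventuallyEq_of_mem (hJopen.mem_nhds ht) hgderiv
    rw [hev.deriv_eq]
    have hdag : DifferentiableAt ℝ (fun s => deriv a (g s)) t :=
      (ha2 _ (hgmaps ht)).comp t (hg1 t ht)
    have h2 : deriv (fun s => deriv a (g s)) t = deriv (deriv a) (g t) * deriv g t :=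
      deriv_comp t (ha2 _ (hgmaps ht)) (hg1 t ht)
    rw [deriv_fun_inv'' hdag (ha'ne _ (hgmaps ht)), h2, hgderiv t ht]
    have hA : deriv a (g t) ≠ 0 := ha'ne _ (hgmaps ht)
    field_simp
    try ring
    try exact Or.inl trivial
  refine ⟨hzd, hz'd, fun t ht => ?_⟩
  have hx := hgmaps ht
  have hA : deriv a (g t) ≠ 0 := ha'ne _ hx
  have hB : b (g t) ≠ 0 := hbne _ hx
  simp only [z, G₀, G₁]
  rw [hz'' t ht, hz' t ht, hw'' _ hx, hw' _ hx, hg'' t ht, hgderiv t ht]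
  have hzt : z t = b (g t) * y (g t) := rfl
  field_simp
  ring
end

section
/- Let I ⊆ ℝ be an open interval, F₀, F₁ : I → ℝ functions, and a, b, y : I → ℝ twice differentiable functions with b(x) ≠ 0 for all x ∈ I. Suppose that on I: (i) a'' = (2·b'/b + F₁)·a'; (ii) b'' = 2·(b')²/b + F₁·b' − F₀·b; and (iii) y'' = F₀·y + F₁·y'. Then the function w := b·y satisfies w''·a' = a''·w' on I. -/
/-- If `(a, b)` solves the auxiliary system `a'' = (2b'/b + F₁)·a'`,
`b'' = 2(b')²/b + F₁·b' − F₀·b` on an open interval `I` (with `b ≠ 0` on `I`), and `y`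
solves the linear ODE `y'' = F₀·y + F₁·y'` on `I`, then `w = b·y` satisfies
`w''·a' = a''·w'` on `I`. -/
theorem trivializing_transformation_identity
    (I : Set ℝ) (hIopen : IsOpen I) (hIconn : I.OrdConnected)
    (F₀ F₁ a b y : ℝ → ℝ)
    (ha1 : ∀ x ∈ I, DifferentiableAt ℝ a x)
    (ha2 : ∀ x ∈ I, DifferentiableAt ℝ (deriv a) x)
    (hb1 : ∀ x ∈ I, DifferentiableAt ℝ b x)
    (hb2 : ∀ x ∈ I, DifferentiableAt ℝ (deriv b) x)
    (hy1 : ∀ x ∈ I, DifferentiableAt ℝ y x)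
    (hy2 : ∀ x ∈ I, DifferentiableAt ℝ (deriv y) x)
    (hbne : ∀ x ∈ I, b x ≠ 0)
    (hODEa : ∀ x ∈ I, deriv (deriv a) x = (2 * deriv b x / b x + F₁ x) * deriv a x)
    (hODEb : ∀ x ∈ I, deriv (deriv b) x
      = 2 * (deriv b x) ^ 2 / b x + F₁ x * deriv b x - F₀ x * b x)
    (hODEy : ∀ x ∈ I, deriv (deriv y) x = F₀ x * y x + F₁ x * deriv y x) :
    ∀ x ∈ I, deriv (deriv (fun t => b t * y t)) x * deriv a x
      = deriv (deriv a) x * deriv (fun t => b t * y t) x := by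
  intro x hx
  have hmem : ∀ᶠ t in nhds x, t ∈ I := hIopen.eventually_mem hx
  have h1 : deriv (fun t => b t * y t) =ᶠ[nhds x]
      fun t => deriv b t * y t + b t * deriv y t := by
    filter_upwards [hmem] with t ht
    exact deriv_mul (hb1 t ht) (hy1 t ht)
  have hd1 : deriv (fun t => b t * y t) x = deriv b x * y x + b x * deriv y x :=
    deriv_mul (hb1 x hx) (hy1 x hx)
  have hd2 : deriv (deriv (fun t => b t * y t)) x
      = deriv (deriv b) x * y x + deriv b x * deriv y x
        + (deriv b x * deriv y x + b x * deriv (deriv y) x) := by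
    rw [h1.deriv_eq]
    rw [deriv_fun_add ((hb2 x hx).fun_mul (hy1 x hx)) ((hb1 x hx).fun_mul (hy2 x hx)),
      deriv_fun_mul (hb2 x hx) (hy1 x hx), deriv_fun_mul (hb1 x hx) (hy2 x hx)]
  rw [hd1, hd2, hODEa x hx, hODEb x hx, hODEy x hx]
  have hb0 := hbne x hx
  field_simp
  ring
end

section
/- Let F₀, F₁ : ℝ → ℝ be smooth functions and x₀ ∈ ℝ. Then there exist ε > 0 and twice continuously differentiable functions a, b : I → ℝ on the interval I = (x₀ − ε, x₀ + ε), with a'(x) ≠ 0 and b(x) ≠ 0 for all x ∈ I, such that for every twice differentiable function y : I → ℝ satisfying y'' = F₀·y + F₁·y' on I, the function w := b·y satisfies w''·a' = a''·w' on I. -/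
open Set

private lemma contDiffOn_two_of_hasDerivAt' {s : Set ℝ} (hs : IsOpen s) {f f' f'' : ℝ → ℝ}
    (hf : ∀ x ∈ s, HasDerivAt f (f' x) x) (hf' : ∀ x ∈ s, HasDerivAt f' (f'' x) x)
    (hcont : ContinuousOn f'' s) : ContDiffOn ℝ 2 f s := by
  have h2 : (2 : WithTop ℕ∞) = 1 + 1 := by norm_num
  rw [h2, contDiffOn_succ_iff_deriv_of_isOpen hs]
  refine ⟨fun x hx => (hf x hx).differentiableAt.differentiableWithinAt, by simp, ?_⟩
  have hd : EqOn (deriv f) f' s := fun x hx => (hf x hx).deriv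
  refine ContDiffOn.congr ?_ hd
  rw [show (1 : WithTop ℕ∞) = 0 + 1 by norm_num, contDiffOn_succ_iff_deriv_of_isOpen hs]
  refine ⟨fun x hx => (hf' x hx).differentiableAt.differentiableWithinAt, by simp, ?_⟩
  have hd' : EqOn (deriv f') f'' s := fun x hx => (hf' x hx).deriv
  exact (ContDiffOn.congr (by simpa [contDiffOn_zero] using hcont) hd')

private lemma ftc_hasDerivAt' (x₀ ε : ℝ) (hε : 0 < ε) (h : ℝ → ℝ)
    (hc : ContinuousOn h (Ioo (x₀-ε) (x₀+ε))) :
    ∀ x ∈ Ioo (x₀-ε) (x₀+ε), HasDerivAt (fun t => ∫ s in x₀..t, h s) (h x) x := by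
  have hx₀ : x₀ ∈ Ioo (x₀ - ε) (x₀ + ε) := by constructor <;> linarith
  intro x hx
  apply intervalIntegral.integral_hasDerivAt_right
  · exact (hc.mono ((ordConnected_Ioo).uIcc_subset hx₀ hx)).intervalIntegrable
  · exact ⟨Ioo (x₀-ε) (x₀+ε), isOpen_Ioo.mem_nhds hx,
      (hc.mono (subset_refl _)).aestronglyMeasurable measurableSet_Ioo⟩
  · exact hc.continuousAt (isOpen_Ioo.mem_nhds hx)

/-- Local trivializability of second-order odd ODEs, expressed at the level of the even
coefficient functions: near any point `x₀` there is a point transformation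
`(x, y) ↦ (a x, b x · y)` with `a' ≠ 0`, `b ≠ 0`, mapping every solution `y` of
`y'' = F₀·y + F₁·y'` to a solution of the trivial equation, i.e. `w = b·y` satisfies
`w''·a' = a''·w'`. -/
theorem odd_second_order_ode_locally_trivializable
    (F₀ F₁ : ℝ → ℝ) (hF₀ : ContDiff ℝ (⊤ : ℕ∞) F₀) (hF₁ : ContDiff ℝ (⊤ : ℕ∞) F₁) (x₀ : ℝ) :
    ∃ ε > (0 : ℝ), ∃ a b : ℝ → ℝ,
      ContDiffOn ℝ 2 a (Set.Ioo (x₀ - ε) (x₀ + ε)) ∧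
      ContDiffOn ℝ 2 b (Set.Ioo (x₀ - ε) (x₀ + ε)) ∧
      (∀ x ∈ Set.Ioo (x₀ - ε) (x₀ + ε), deriv a x ≠ 0) ∧
      (∀ x ∈ Set.Ioo (x₀ - ε) (x₀ + ε), b x ≠ 0) ∧
      ∀ y : ℝ → ℝ,
        (∀ x ∈ Set.Ioo (x₀ - ε) (x₀ + ε), DifferentiableAt ℝ y x) →
        (∀ x ∈ Set.Ioo (x₀ - ε) (x₀ + ε), DifferentiableAt ℝ (deriv y) x) →
        (∀ x ∈ Set.Ioo (x₀ - ε) (x₀ + ε),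
          deriv (deriv y) x = F₀ x * y x + F₁ x * deriv y x) →
        ∀ x ∈ Set.Ioo (x₀ - ε) (x₀ + ε),
          deriv (deriv (fun t => b t * y t)) x * deriv a x
            = deriv (deriv a) x * deriv (fun t => b t * y t) x := by
  classical
  -- Solve the linear ODE u'' = F₀ u + F₁ u' via an autonomous first-order system.
  set v : ℝ × ℝ × ℝ → ℝ × ℝ × ℝ :=
    fun z => (1, z.2.2, F₀ z.1 * z.2.1 + F₁ z.1 * z.2.2) with hv
  have hvc : ContDiff ℝ 1 v := by
    apply ContDiff.prodMk contDiff_const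
    apply ContDiff.prodMk (contDiff_snd.snd)
    exact ((hF₀.of_le (by simp)).comp contDiff_fst).mul contDiff_snd.fst |>.add
      (((hF₁.of_le (by simp)).comp contDiff_fst).mul contDiff_snd.snd)
  obtain ⟨f, hf0, ε₁, hε₁, hf⟩ :=
    ContDiffAt.exists_forall_mem_closedBall_exists_eq_forall_mem_Ioo_hasDerivAt₀ (E := ℝ × ℝ × ℝ)
      (x₀ := ((x₀ : ℝ), (1:ℝ), (0:ℝ))) hvc.contDiffAt x₀
  set u : ℝ → ℝ := fun t => (f t).2.1 with hu_def
  set p : ℝ → ℝ := fun t => (f t).2.2 with hp_def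
  have hu0 : u x₀ = 1 := by simp [hu_def, hf0]
  have hx₀1 : x₀ ∈ Ioo (x₀ - ε₁) (x₀ + ε₁) := by constructor <;> linarith
  -- the first component of f is the identity
  have hfst : ∀ t ∈ Ioo (x₀ - ε₁) (x₀ + ε₁), (f t).1 = t := by
    have h1 : ∀ t ∈ Ioo (x₀ - ε₁) (x₀ + ε₁), HasDerivAt (fun s => (f s).1) 1 t :=
      fun t ht => (hf t ht).fst
    have hg : ∀ t ∈ Ioo (x₀ - ε₁) (x₀ + ε₁), HasDerivAt (fun t => (f t).1 - t) 0 t := by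
      intro t ht
      simpa using (h1 t ht).fun_sub (hasDerivAt_id t)
    intro t ht
    have hconst := (convex_Ioo (x₀ - ε₁) (x₀ + ε₁)).is_const_of_fderivWithin_eq_zero
      (f := fun t => (f t).1 - t)
      (fun x hx => (hg x hx).differentiableAt.differentiableWithinAt)
      (fun x hx => by
        rw [fderivWithin_of_isOpen isOpen_Ioo hx, (hg x hx).hasFDerivAt.fderiv]
        ext; simp) ht hx₀1
    have h4 : (f t).1 - t = (f x₀).1 - x₀ := hconst
    rw [hf0] at h4
    simp at h4
    linarith
  have hu1 : ∀ t ∈ Ioo (x₀ - ε₁) (x₀ + ε₁), HasDerivAt u (p t) t :=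
    fun t ht => ((hf t ht).snd).fst
  have hp1 : ∀ t ∈ Ioo (x₀ - ε₁) (x₀ + ε₁),
      HasDerivAt p (F₀ t * u t + F₁ t * p t) t := by
    intro t ht
    have h2 : HasDerivAt p (F₀ (f t).1 * u t + F₁ (f t).1 * p t) t := ((hf t ht).snd).snd
    rwa [hfst t ht] at h2
  -- shrink the interval so that u > 0
  have hucont : ContinuousAt u x₀ := (hu1 x₀ hx₀1).differentiableAt.continuousAt
  have hupos : ∀ᶠ x in nhds x₀, 0 < u x :=
    continuousAt_const.eventually_lt hucont (by simp [hu0])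
  obtain ⟨δ, hδ, hδ'⟩ := Metric.eventually_nhds_iff.mp hupos
  set ε : ℝ := min ε₁ δ with hε_def
  have hε : 0 < ε := lt_min hε₁ hδ
  set I : Set ℝ := Ioo (x₀ - ε) (x₀ + ε) with hI_def
  have hIsub : I ⊆ Ioo (x₀ - ε₁) (x₀ + ε₁) := by
    have hεε : ε ≤ ε₁ := min_le_left _ _
    apply Ioo_subset_Ioo <;> linarith
  have hx₀I : x₀ ∈ I := ⟨by linarith, by linarith⟩
  have hupos' : ∀ x ∈ I, 0 < u x := by
    intro x hx
    apply hδ'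
    rw [Real.dist_eq, abs_lt]
    obtain ⟨h1, h2⟩ := hx
    have : ε ≤ δ := min_le_right _ _
    constructor <;> linarith
  have hune : ∀ x ∈ I, u x ≠ 0 := fun x hx => (hupos' x hx).ne'
  have huI : ∀ x ∈ I, HasDerivAt u (p x) x := fun x hx => hu1 x (hIsub hx)
  have hpI : ∀ x ∈ I, HasDerivAt p (F₀ x * u x + F₁ x * p x) x :=
    fun x hx => hp1 x (hIsub hx)
  have huC : ContinuousOn u I := fun x hx => (huI x hx).differentiableAt.continuousAt.continuousWithinAt
  have hpC : ContinuousOn p I := fun x hx => (hpI x hx).differentiableAt.continuousAt.continuousWithinAt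
  -- definitions
  set Ef : ℝ → ℝ := fun t => Real.exp (∫ s in x₀..t, F₁ s) with hEf_def
  have hEfpos : ∀ t, 0 < Ef t := fun t => Real.exp_pos _
  have hEf : ∀ x : ℝ, HasDerivAt Ef (F₁ x * Ef x) x := by
    intro x
    have hG : HasDerivAt (fun t => ∫ s in x₀..t, F₁ s) (F₁ x) x :=
      intervalIntegral.integral_hasDerivAt_right
        (hF₁.continuous.intervalIntegrable _ _)
        (hF₁.continuous.stronglyMeasurableAtFilter _ _) hF₁.continuous.continuousAt
    simpa [hEf_def, mul_comm, Function.comp_def] using (Real.hasDerivAt_exp (∫ s in x₀..x, F₁ s)).comp x hG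
  set v2 : ℝ → ℝ := fun t => ((u t)^2)⁻¹ with hv2_def
  set h : ℝ → ℝ := fun t => Ef t * v2 t with hh_def
  have hEfC : Continuous Ef := by
    apply Real.continuous_exp.comp
    exact intervalIntegral.continuous_primitive
      (fun a b => hF₁.continuous.intervalIntegrable a b) x₀
  have hhC : ContinuousOn h I :=
    hEfC.continuousOn.mul (((huC.pow 2).inv₀ (fun x hx => pow_ne_zero 2 (hune x hx))))
  set a : ℝ → ℝ := fun t => ∫ s in x₀..t, h s with ha_def
  set b : ℝ → ℝ := fun t => (u t)⁻¹ with hb_def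
  have haI : ∀ x ∈ I, HasDerivAt a (h x) x := ftc_hasDerivAt' x₀ ε hε h (by rwa [← hI_def])
  -- derivative of v2
  set dd : ℝ → ℝ := fun t => -(2 * u t ^ 1 * p t) / ((u t) ^ 2) ^ 2 with hdd_def
  have hv2I : ∀ x ∈ I, HasDerivAt v2 (dd x) x := by
    intro x hx
    exact ((huI x hx).pow 2).inv (pow_ne_zero 2 (hune x hx))
  -- ContDiffOn facts
  have huCD : ContDiffOn ℝ 2 u I :=
    contDiffOn_two_of_hasDerivAt' isOpen_Ioo huI hpI
      ((hF₀.continuous.continuousOn.mul huC).add (hF₁.continuous.continuousOn.mul hpC))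
  have hbCD : ContDiffOn ℝ 2 b I := huCD.inv hune
  have hv2CD : ContDiffOn ℝ 1 v2 I := ((huCD.of_le one_le_two).pow 2).inv
    (fun x hx => pow_ne_zero 2 (hune x hx))
  have hEfCD : ContDiffOn ℝ 1 Ef I := by
    rw [show (1 : WithTop ℕ∞) = 0 + 1 by norm_num,
      contDiffOn_succ_iff_deriv_of_isOpen isOpen_Ioo]
    refine ⟨fun x hx => (hEf x).differentiableAt.differentiableWithinAt, by simp, ?_⟩
    have heq : EqOn (deriv Ef) (fun x => F₁ x * Ef x) I := fun x _ => (hEf x).deriv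
    exact ContDiffOn.congr
      (by simpa [contDiffOn_zero] using hF₁.continuous.continuousOn.fun_mul hEfC.continuousOn) heq
  have hhCD : ContDiffOn ℝ 1 h I := hEfCD.mul hv2CD
  have haCD : ContDiffOn ℝ 2 a I := by
    have h2 : (2 : WithTop ℕ∞) = 1 + 1 := by norm_num
    rw [h2, contDiffOn_succ_iff_deriv_of_isOpen isOpen_Ioo]
    refine ⟨fun x hx => (haI x hx).differentiableAt.differentiableWithinAt, by simp, ?_⟩
    exact ContDiffOn.congr hhCD (fun x hx => (haI x hx).deriv)
  refine ⟨ε, hε, a, b, haCD, hbCD, ?_, ?_, ?_⟩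
  · intro x hx
    rw [(haI x hx).deriv]
    have := hEfpos x
    have := hupos' x hx
    simp only [hh_def, hv2_def]
    positivity
  · intro x hx
    exact inv_ne_zero (hune x hx)
  · intro y hy hy' hode x hx
    set W : ℝ → ℝ := fun t => deriv y t * u t - y t * p t with hW_def
    -- w = b * y has derivative W * v2 on I
    have hw : ∀ t ∈ I, HasDerivAt (fun s => b s * y s) (W t * v2 t) t := by
      intro t ht
      have := (((huI t ht).inv (hune t ht)).fun_mul (hy t ht).hasDerivAt)
      refine this.congr_deriv ?_
      have hne := hune t ht
      simp only [hW_def, hv2_def, Pi.inv_apply]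
      field_simp
      ring
    -- W has derivative F₁ * W on I
    have hWd : ∀ t ∈ I, HasDerivAt W (F₁ t * W t) t := by
      intro t ht
      have h1 := ((hy' t ht).hasDerivAt.fun_mul (huI t ht)).fun_sub
        ((hy t ht).hasDerivAt.fun_mul (hpI t ht))
      refine h1.congr_deriv ?_
      rw [hode t ht]
      simp only [hW_def]
      ring
    have hwv : ∀ t ∈ I, HasDerivAt (fun s => W s * v2 s)
        (F₁ t * W t * v2 t + W t * dd t) t :=
      fun t ht => (hWd t ht).mul (hv2I t ht)
    have hav : ∀ t ∈ I, HasDerivAt (fun s => Ef s * v2 s)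
        (F₁ t * Ef t * v2 t + Ef t * dd t) t :=
      fun t ht => (hEf t).mul (hv2I t ht)
    -- second derivatives via eventual equality
    have hmemI : I ∈ nhds x := isOpen_Ioo.mem_nhds hx
    have e1 : deriv (fun s => b s * y s) =ᶠ[nhds x] (fun s => W s * v2 s) :=
      Filter.eventuallyEq_of_mem hmemI (fun t ht => (hw t ht).deriv)
    have e2 : deriv a =ᶠ[nhds x] (fun s => Ef s * v2 s) := by
      apply Filter.eventuallyEq_of_mem hmemI
      intro t ht
      rw [(haI t ht).deriv]
    have d1 : deriv (deriv (fun s => b s * y s)) x = F₁ x * W x * v2 x + W x * dd x := by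
      rw [e1.deriv_eq, (hwv x hx).deriv]
    have d2 : deriv (deriv a) x = F₁ x * Ef x * v2 x + Ef x * dd x := by
      rw [e2.deriv_eq, (hav x hx).deriv]
    rw [d1, d2, (hw x hx).deriv, (haI x hx).deriv]
    simp only [hh_def]
    ring
end
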